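/- For complex y, z with |y| < 1, |z| < 1: ∑ over pairs (a,b) with 0 ≤ a < b, gcd(a,b) = 1 of (1/b)·(−log(1 − y^a z^b)) equals (1/(1−y))·log((1−yz)/(1−z)). -/

import Mathlib

/-!
Expanding `-log (1 - w) = ∑_{n ≥ 1} wⁿ / n`, the left side becomes a sum over coprime pairs
`(a, b)` and `n ≥ 1` of `y^(na) z^(nb) / (nb)`; since every pair `a < b` is uniquely
`n • (a', b')` with `(a', b')` coprime, this is `∑_{a < b} yᵃ zᵇ / b`. For fixed `b` the sum over
`a < b` is geometric, `(zᵇ - (yz)ᵇ) / (b (1 - y))`, and summing over `b` gives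
`(log (1 - yz) - log (1 - z)) / (1 - y)`.
-/

open Complex

theorem norm_mul_lt_one_of_le_of_lt {R : Type*} [NonUnitalSeminormedRing R] {y z : R}
    (hy : ‖y‖ ≤ 1) (hz : ‖z‖ < 1) : ‖y * z‖ < 1 :=
  (norm_mul_le y z).trans_lt (mul_lt_one_of_nonneg_of_lt_one_right hy (norm_nonneg z) hz)

theorem norm_pow_mul_pow_lt_one {𝕜 : Type*} [NormedDivisionRing 𝕜] {y z : 𝕜} (hy : ‖y‖ ≤ 1)
    (hz : ‖z‖ < 1) (a : ℕ) {b : ℕ} (hb : b ≠ 0) : ‖y ^ a * z ^ b‖ < 1 :=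
  norm_mul_lt_one_of_le_of_lt (norm_pow y a ▸ pow_le_one₀ (norm_nonneg y) hy)
    (norm_pow z b ▸ pow_lt_one₀ (norm_nonneg z) hz hb)

namespace Complex

theorem re_one_sub_pos {w : ℂ} (hw : ‖w‖ < 1) : 0 < (1 - w).re := by
  simpa using (re_le_norm w).trans_lt hw

theorem log_div_of_re_pos {u v : ℂ} (hu : 0 < u.re) (hv : 0 < v.re) :
    log (u / v) = log u - log v := by
  have hu' := abs_lt.1 (abs_arg_lt_pi_div_two_iff.2 (Or.inl hu))
  have hv' := abs_lt.1 (abs_arg_lt_pi_div_two_iff.2 (Or.inl hv))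
  have hu0 : u ≠ 0 := fun h ↦ by simp [h] at hu
  have hv0 : v ≠ 0 := fun h ↦ by simp [h] at hv
  rw [← exp_log hu0, ← exp_log hv0, ← exp_sub, log_exp, log_exp, log_exp] <;>
    simp only [sub_im, log_im] <;> linarith [Real.pi_pos]

theorem hasSum_pnat_pow_div {w : ℂ} (hw : ‖w‖ < 1) :
    HasSum (fun n : ℕ+ ↦ w ^ (n : ℕ) / (n : ℂ)) (-log (1 - w)) :=
  hasSum_pnat_iff (f := fun n : ℕ ↦ w ^ n / (n : ℂ)) |>.2 <| by
    simpa using hasSum_taylorSeries_neg_log hw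

theorem sum_fin_pow_mul_pow_div {y : ℂ} (hy : y ≠ 1) (z : ℂ) (b : ℕ) :
    ∑ a : Fin b, y ^ (a : ℕ) * z ^ b / b = (z ^ b / b - (y * z) ^ b / b) / (1 - y) := by
  have hy' : 1 - y ≠ 0 := sub_ne_zero.2 hy.symm
  rw [Fin.sum_univ_eq_sum_range (fun a ↦ y ^ a * z ^ b / b), ← Finset.sum_div, ← Finset.sum_mul,
    geom_sum_eq hy, mul_pow]
  field_simp
  ring

theorem hasSum_pnat_pow_mul_pow_div {y z : ℂ} (a b : ℕ) (h : ‖y ^ a * z ^ b‖ < 1) :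
    HasSum (fun n : ℕ+ ↦ y ^ (n * a) * z ^ (n * b) / ((n * b : ℕ) : ℂ))
      (1 / b * -log (1 - y ^ a * z ^ b)) := by
  refine (hasSum_pnat_pow_div h).mul_left (1 / b : ℂ) |>.congr_fun fun n ↦ ?_
  rw [mul_pow, ← pow_mul, ← pow_mul, mul_comm a, mul_comm b, Nat.cast_mul]
  ring

end Complex

abbrev LtPair : Type := {p : ℕ × ℕ // p.1 < p.2}

abbrev CoprimeLtPair : Type := {p : ℕ × ℕ // p.1 < p.2 ∧ Nat.gcd p.1 p.2 = 1}

def LtPair.sigmaFinEquiv : (Σ b : ℕ, Fin b) ≃ LtPair where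
  toFun x := ⟨(x.2, x.1), x.2.isLt⟩
  invFun p := ⟨p.1.2, p.1.1, p.2⟩
  left_inv _ := rfl
  right_inv _ := rfl

def CoprimeLtPair.prodPNatEquiv : CoprimeLtPair × ℕ+ ≃ LtPair where
  toFun x := ⟨(x.2 * x.1.1.1, x.2 * x.1.1.2), Nat.mul_lt_mul_of_pos_left x.1.2.1 x.2.pos⟩
  invFun p :=
    have hg : 0 < Nat.gcd p.1.1 p.1.2 := Nat.gcd_pos_of_pos_right _ (p.1.1.zero_le.trans_lt p.2)
    (⟨(p.1.1 / Nat.gcd p.1.1 p.1.2, p.1.2 / Nat.gcd p.1.1 p.1.2),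
      Nat.div_lt_div_of_lt_of_dvd (Nat.gcd_dvd_right _ _) p.2, Nat.coprime_div_gcd_div_gcd hg⟩,
      ⟨_, hg⟩)
  left_inv := by
    rintro ⟨⟨⟨a, b⟩, hab, hcop⟩, n⟩
    have hg : Nat.gcd (n * a) (n * b) = n := by rw [Nat.gcd_mul_left, hcop, mul_one]
    refine Prod.ext (Subtype.ext (Prod.ext ?_ ?_)) (PNat.eq hg) <;> simp [hg]
  right_inv := by
    rintro ⟨⟨a, b⟩, _⟩
    ext
    · exact Nat.mul_div_cancel' (Nat.gcd_dvd_left a b)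
    · exact Nat.mul_div_cancel' (Nat.gcd_dvd_right a b)

namespace Complex

theorem summable_ltPair_pow_mul_pow_div {y z : ℂ} (hy : ‖y‖ < 1) (hz : ‖z‖ < 1) :
    Summable fun p : LtPair ↦ y ^ p.1.1 * z ^ p.1.2 / p.1.2 := by
  have hprod : Summable fun p : ℕ × ℕ ↦ ‖y ^ p.1 * z ^ p.2‖ := by
    simpa only [norm_mul, norm_pow] using
      (summable_geometric_of_lt_one (norm_nonneg y) hy).mul_of_nonneg
        (summable_geometric_of_lt_one (norm_nonneg z) hz) (fun _ ↦ by positivity)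
        (fun _ ↦ by positivity)
  refine .of_norm_bounded (hprod.subtype _) fun ⟨⟨a, b⟩, hab⟩ ↦ ?_
  rw [norm_div, norm_natCast]
  exact div_le_self (norm_nonneg _) (by exact_mod_cast (a.zero_le.trans_lt hab))

theorem hasSum_ltPair_pow_mul_pow_div {y z : ℂ} (hy : ‖y‖ < 1) (hz : ‖z‖ < 1) :
    HasSum (fun p : LtPair ↦ y ^ p.1.1 * z ^ p.1.2 / p.1.2)
      ((-log (1 - z) + log (1 - y * z)) / (1 - y)) := by
  have hy1 : y ≠ 1 := by rintro rfl; simp at hy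
  obtain ⟨S, hS⟩ := summable_ltPair_pow_mul_pow_div hy hz
  have hcolumns : HasSum (fun b : ℕ ↦ (z ^ b / b - (y * z) ^ b / b) / (1 - y))
      ((-log (1 - z) + log (1 - y * z)) / (1 - y)) := by
    simpa [sub_eq_add_neg] using ((hasSum_taylorSeries_neg_log hz).sub
      (hasSum_taylorSeries_neg_log (norm_mul_lt_one_of_le_of_lt hy.le hz))).div_const (1 - y)
  convert hS
  refine hcolumns.unique ((LtPair.sigmaFinEquiv.hasSum_iff.2 hS).sigma fun b ↦ ?_)
  rw [← sum_fin_pow_mul_pow_div hy1]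
  exact hasSum_fintype _

end Complex

theorem vpv_hyperpyramid_log_identity (y z : ℂ) (hy : ‖y‖ < 1)
    (hz : ‖z‖ < 1) :
    ∑' p : {p : ℕ × ℕ // p.1 < p.2 ∧ Nat.gcd p.1 p.2 = 1},
        (1 / ((p : ℕ × ℕ).2 : ℂ)) *
          (-Complex.log (1 - y ^ (p : ℕ × ℕ).1 * z ^ (p : ℕ × ℕ).2)) =
      (1 / (1 - y)) * Complex.log ((1 - y * z) / (1 - z)) := by
  have hpairs := CoprimeLtPair.prodPNatEquiv.hasSum_iff.2 (hasSum_ltPair_pow_mul_pow_div hy hz)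
  have hmultiples := hpairs.prod_fiberwise
    (g := fun p : CoprimeLtPair ↦ 1 / (p.1.2 : ℂ) * -log (1 - y ^ p.1.1 * z ^ p.1.2))
    fun ⟨⟨a, b⟩, hab, _⟩ ↦ hasSum_pnat_pow_mul_pow_div a b
      (norm_pow_mul_pow_lt_one hy.le hz a (a.zero_le.trans_lt hab).ne')
  rw [hmultiples.tsum_eq, log_div_of_re_pos
    (re_one_sub_pos (norm_mul_lt_one_of_le_of_lt hy.le hz)) (re_one_sub_pos hz)]
  ring
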